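/- If a cubic graph G admits a 2-packing of four joins {J1, J2, J3, J4} with J4 connected, then G admits a (1,2)-cover of its edge set by four joins, i.e., four joins such that every edge of G belongs to at least one and at most two of them. -/

import Mathlib

/-- The number of edges of `S` incident with `v`. -/
noncomputable def edgeDeg {V : Type*} (S : Set (Sym2 V)) (v : V) : ℕ :=
  {e ∈ S | v ∈ e}.ncard

/-- A join of a cubic graph `G`: a set of edges in which every vertex has degree 1 or 3. -/
def IsJoinOf {V : Type*} (G : SimpleGraph V) (J : Set (Sym2 V)) : Prop :=
  J ⊆ G.edgeSet ∧ ∀ v : V, edgeDeg J v = 1 ∨ edgeDeg J v = 3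

/-- `c` is a proper 3-edge-colouring of the edge set `J`. -/
def IsProperOn {V : Type*} (J : Set (Sym2 V)) (c : Sym2 V → Fin 3) : Prop :=
  ∀ e₁ ∈ J, ∀ e₂ ∈ J, e₁ ≠ e₂ → (∃ v : V, v ∈ e₁ ∧ v ∈ e₂) → c e₁ ≠ c e₂

/-!
In a cubic graph the joins are exactly the edge sets in which every vertex has odd degree, so the
symmetric difference of a join with an even edge set, and that of three joins, is again a join.
Keep `J 1` and `J 2`, replace `J 3` by `J 1 ∆ J 2 ∆ J 3`, and replace `J 0` by `W ∆ S`, where `W`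
is the set of edges outside `J 1 ∪ J 2 ∪ J 3` and `S ⊆ J 3` is built from paths of the connected
graph `J 3` so that `J 0 ∆ W ∆ S` is even. An edge outside `J 3` then lies in one new join if it
avoids `J 1` and `J 2`, and in two otherwise. By the packing condition an edge of `J 3` lies in at
most one of `J 1`, `J 2`, hence in exactly one of the last three new joins, and possibly in `W ∆ S`.
-/

section JoinsOfCubicGraphs

open SimpleGraph
open scoped symmDiff

variable {V : Type*}

lemma edgeDeg_edgeSet (G : SimpleGraph V) [Fintype V] [DecidableRel G.Adj] (v : V) :
    edgeDeg G.edgeSet v = G.degree v := by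
  classical
  rw [← card_incidenceSet_eq_degree, ← Nat.card_eq_fintype_card, Nat.card_coe_set_eq]
  rfl

lemma even_edgeDeg_singleton (e : Sym2 V) (v : V) : Even (edgeDeg {e} v) ↔ v ∉ e := by
  by_cases hv : v ∈ e
  · rw [edgeDeg, Set.sep_eq_self_iff_mem_true.mpr (by simpa)]
    simp [hv]
  · rw [edgeDeg, Set.sep_eq_empty_iff_mem_false.mpr (by simpa)]
    simp [hv]

lemma SimpleGraph.Walk.IsTrail.even_edgeDeg_edges_iff {H : SimpleGraph V} {u w : V}
    {p : H.Walk u w} (hp : p.IsTrail) (x : V) :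
    Even (edgeDeg {e | e ∈ p.edges} x) ↔ (u ≠ w → x ≠ u ∧ x ≠ w) := by
  classical
  have hfilter : {e ∈ {e | e ∈ p.edges} | x ∈ e} =
      ((p.edges.filter (x ∈ ·)).toFinset : Set (Sym2 V)) := by
    ext e
    simp
  rw [edgeDeg, hfilter, Set.ncard_coe_finset, List.toFinset_card_of_nodup (hp.edges_nodup.filter _),
    ← List.countP_eq_length_filter, hp.even_countP_edges_iff]

section Finite

variable [Finite V]

lemma edgeDeg_mono {A B : Set (Sym2 V)} (h : A ⊆ B) (v : V) : edgeDeg A v ≤ edgeDeg B v :=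
  Set.ncard_le_ncard fun _ he ↦ ⟨h he.1, he.2⟩

lemma edgeDeg_symmDiff_add (A B : Set (Sym2 V)) (v : V) :
    edgeDeg (A ∆ B) v + 2 * edgeDeg (A ∩ B) v = edgeDeg A v + edgeDeg B v := by
  set a := {e ∈ A | v ∈ e}
  set b := {e ∈ B | v ∈ e}
  have hsymm : {e ∈ A ∆ B | v ∈ e} = (a ∪ b) \ (a ∩ b) := by
    ext e
    simp only [Set.mem_symmDiff, Set.mem_ofPred_eq, Set.mem_sdiff, Set.mem_union,
      Set.mem_inter_iff, a, b]
    tauto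
  have hinter : {e ∈ A ∩ B | v ∈ e} = a ∩ b := by
    ext e; simp [a, b]
  simp only [edgeDeg, hsymm, hinter]
  have := Set.ncard_sdiff_add_ncard_of_subset (Set.inter_subset_left.trans Set.subset_union_left)
    (s := a ∩ b) (t := a ∪ b)
  have := Set.ncard_union_add_ncard_inter a b
  change ((a ∪ b) \ (a ∩ b)).ncard + 2 * (a ∩ b).ncard = a.ncard + b.ncard
  omega

lemma even_edgeDeg_symmDiff (A B : Set (Sym2 V)) (v : V) :
    Even (edgeDeg (A ∆ B) v) ↔ (Even (edgeDeg A v) ↔ Even (edgeDeg B v)) := by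
  rw [← Nat.even_add, ← edgeDeg_symmDiff_add]
  simp [Nat.even_add]

lemma even_edgeDeg_symmDiff_edges {H : SimpleGraph V} {u w : V} (huw : u ≠ w) {p : H.Walk u w}
    (hp : p.IsTrail) (x : V) : Even (edgeDeg ({s(u, w)} ∆ {e | e ∈ p.edges}) x) := by
  rw [even_edgeDeg_symmDiff, even_edgeDeg_singleton, hp.even_edgeDeg_edges_iff]
  simp [huw]

lemma exists_subset_edgeSet_even_edgeDeg_symmDiff {H : SimpleGraph V} (hH : H.Connected)
    {X : Set (Sym2 V)} (hX : ∀ e ∈ X, ¬e.IsDiag) :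
    ∃ S ⊆ H.edgeSet, ∀ v, Even (edgeDeg (X ∆ S) v) := by
  classical
  -- The parity defect of a new edge `s(u, w)` at `u` and `w` is cancelled by a `u`-`w` path in `H`.
  induction X, X.toFinite using Set.Finite.induction_on with
  | empty => exact ⟨∅, by simp, fun v ↦ by simp [edgeDeg]⟩
  | @insert e X he _ ih =>
    obtain ⟨S, hSH, hS⟩ := ih fun e' he' ↦ hX e' (Set.mem_insert_of_mem _ he')
    induction e using Sym2.ind with | h u w => ?_
    have huw : u ≠ w := hX _ (Set.mem_insert _ _)
    obtain ⟨p, hp⟩ := hH.preconnected.exists_isPath u w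
    refine ⟨S ∆ {e | e ∈ p.edges}, ?_, fun v ↦ ?_⟩
    · exact symmDiff_le_sup.trans (sup_le hSH fun e he ↦ p.edges_subset_edgeSet he)
    · have hsplit : insert s(u, w) X ∆ (S ∆ {e | e ∈ p.edges}) =
          (X ∆ S) ∆ ({s(u, w)} ∆ {e | e ∈ p.edges}) := by
        have hins : insert s(u, w) X = {s(u, w)} ∆ X :=
          (Set.disjoint_singleton_left.mpr he).symmDiff_eq_sup.symm
        rw [hins, symmDiff_comm {s(u, w)}, symmDiff_symmDiff_symmDiff_comm]
      rw [hsplit, even_edgeDeg_symmDiff]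
      simpa [hS v] using even_edgeDeg_symmDiff_edges huw hp.isTrail v

end Finite

section Joins

variable [Fintype V] {G : SimpleGraph V} [DecidableRel G.Adj]

lemma edgeDeg_le_degree {A : Set (Sym2 V)} (hA : A ⊆ G.edgeSet) (v : V) :
    edgeDeg A v ≤ G.degree v :=
  edgeDeg_edgeSet G v ▸ edgeDeg_mono hA v

lemma isJoinOf_iff (hG : G.IsRegularOfDegree 3) {J : Set (Sym2 V)} :
    IsJoinOf G J ↔ J ⊆ G.edgeSet ∧ ∀ v, Odd (edgeDeg J v) := by
  refine and_congr_right fun hJ ↦ forall_congr' fun v ↦ ?_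
  have := (edgeDeg_le_degree hJ v).trans_eq (hG v)
  constructor
  · rintro (h | h) <;> rw [h] <;> decide
  · rintro ⟨k, hk⟩
    omega

lemma IsJoinOf.even_edgeDeg_symmDiff (hG : G.IsRegularOfDegree 3) {J K : Set (Sym2 V)}
    (hJ : IsJoinOf G J) (hK : IsJoinOf G K) (v : V) : Even (edgeDeg (J ∆ K) v) := by
  rw [isJoinOf_iff hG] at hJ hK
  rw [_root_.even_edgeDeg_symmDiff, ← Nat.not_odd_iff_even, ← Nat.not_odd_iff_even]
  simp [hJ.2 v, hK.2 v]

lemma IsJoinOf.symmDiff_of_even (hG : G.IsRegularOfDegree 3) {J Z : Set (Sym2 V)}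
    (hJ : IsJoinOf G J) (hZ : Z ⊆ G.edgeSet) (hZeven : ∀ v, Even (edgeDeg Z v)) :
    IsJoinOf G (J ∆ Z) := by
  rw [isJoinOf_iff hG] at hJ ⊢
  refine ⟨symmDiff_le_sup.trans (sup_le hJ.1 hZ), fun v ↦ ?_⟩
  rw [← Nat.not_even_iff_odd, _root_.even_edgeDeg_symmDiff, ← Nat.not_odd_iff_even]
  simp [hJ.2 v, hZeven v]

lemma IsJoinOf.symmDiff_symmDiff (hG : G.IsRegularOfDegree 3) {J₁ J₂ J₃ : Set (Sym2 V)}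
    (h₁ : IsJoinOf G J₁) (h₂ : IsJoinOf G J₂) (h₃ : IsJoinOf G J₃) :
    IsJoinOf G (J₁ ∆ (J₂ ∆ J₃)) :=
  h₁.symmDiff_of_even hG (symmDiff_le_sup.trans (sup_le h₂.1 h₃.1))
    (h₂.even_edgeDeg_symmDiff hG h₃)

lemma IsJoinOf.exists_isJoinOf_symmDiff (hG : G.IsRegularOfDegree 3) {J W : Set (Sym2 V)}
    (hJ : IsJoinOf G J) (hW : W ⊆ G.edgeSet) {H : SimpleGraph V} (hH : H.Connected)
    (hHG : H ≤ G) : ∃ S ⊆ H.edgeSet, IsJoinOf G (W ∆ S) := by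
  have hJW : J ∆ W ⊆ G.edgeSet := symmDiff_le_sup.trans (sup_le hJ.1 hW)
  obtain ⟨S, hSH, hS⟩ := exists_subset_edgeSet_even_edgeDeg_symmDiff hH
    fun e he ↦ G.not_isDiag_of_mem_edgeSet (hJW he)
  refine ⟨S, hSH, ?_⟩
  have hZ : (J ∆ W) ∆ S ⊆ G.edgeSet :=
    symmDiff_le_sup.trans (sup_le hJW (hSH.trans (edgeSet_mono hHG)))
  simpa [symmDiff_assoc] using hJ.symmDiff_of_even hG hZ hS

end Joins

lemma natCard_subtype_fin_four (P : Fin 4 → Prop) [DecidablePred P] :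
    Nat.card {i : Fin 4 // P i} =
      (if P 0 then 1 else 0) + (if P 1 then 1 else 0) + (if P 2 then 1 else 0) +
        (if P 3 then 1 else 0) := by
  rw [Nat.card_eq_fintype_card, Fintype.card_subtype, Finset.card_filter, Fin.sum_univ_four]

end JoinsOfCubicGraphs

theorem packing_gives_cover_general {V : Type*} [Fintype V]
    (G : SimpleGraph V) [DecidableRel G.Adj]
    (hcubic : ∀ v : V, G.degree v = 3)
    (J : Fin 4 → Set (Sym2 V))
    (hjoins : ∀ i, IsJoinOf G (J i))
    (hpack : ∀ e : Sym2 V, Nat.card {i : Fin 4 // e ∈ J i} ≤ 2)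
    (hconn : (SimpleGraph.fromEdgeSet (J 3)).Connected) :
    ∃ K : Fin 4 → Set (Sym2 V),
      (∀ i, IsJoinOf G (K i)) ∧
      (∀ e ∈ G.edgeSet, 1 ≤ Nat.card {i : Fin 4 // e ∈ K i} ∧
        Nat.card {i : Fin 4 // e ∈ K i} ≤ 2) := by
  classical
  obtain ⟨S, hSJ, hK₀⟩ := (hjoins 0).exists_isJoinOf_symmDiff hcubic
    (Set.sdiff_subset (t := J 1 ∪ J 2 ∪ J 3)) hconn
    (G.fromEdgeSet_le.mpr (Set.sdiff_subset.trans (hjoins 3).1))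
  have hS : S ⊆ J 3 := by
    rw [SimpleGraph.edgeSet_fromEdgeSet] at hSJ
    exact hSJ.trans Set.sdiff_subset
  refine ⟨![symmDiff (G.edgeSet \ (J 1 ∪ J 2 ∪ J 3)) S, J 1, J 2,
    symmDiff (J 1) (symmDiff (J 2) (J 3))], fun i ↦ ?_, fun e he ↦ ?_⟩
  · fin_cases i
    exacts [hK₀, hjoins 1, hjoins 2, (hjoins 1).symmDiff_symmDiff hcubic (hjoins 2) (hjoins 3)]
  · have h123 : e ∈ J 3 → e ∈ J 1 → e ∉ J 2 := by
      intro h3 h1 h2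
      have := hpack e
      simp only [natCard_subtype_fin_four, h1, h2, h3, if_true] at this
      split_ifs at this <;> omega
    have hSe : e ∈ S → e ∈ J 3 := @hS e
    rw [natCard_subtype_fin_four]
    by_cases h1 : e ∈ J 1 <;> by_cases h2 : e ∈ J 2 <;> by_cases h3 : e ∈ J 3 <;>
      by_cases hs : e ∈ S <;> simp_all [Set.mem_symmDiff]

/-- If a cubic graph `G` admits a 2-packing of four joins with the fourth
one connected, then `G` admits a (1,2)-cover of its edge set by four joins: every edge lies
in at least one and at most two of them. -/
theorem packing_gives_cover {V : Type*} [Fintype V] [DecidableEq V]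
    (G : SimpleGraph V) [DecidableRel G.Adj]
    (hcubic : ∀ v : V, G.degree v = 3)
    (J : Fin 4 → Set (Sym2 V))
    (hjoins : ∀ i, IsJoinOf G (J i))
    (hpack : ∀ e : Sym2 V, Nat.card {i : Fin 4 // e ∈ J i} ≤ 2)
    (hconn : (SimpleGraph.fromEdgeSet (J 3)).Connected) :
    ∃ K : Fin 4 → Set (Sym2 V),
      (∀ i, IsJoinOf G (K i)) ∧
      (∀ e ∈ G.edgeSet, 1 ≤ Nat.card {i : Fin 4 // e ∈ K i} ∧
        Nat.card {i : Fin 4 // e ∈ K i} ≤ 2) :=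
  packing_gives_cover_general G hcubic J hjoins hpack hconn
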